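/- There exists a constant c > 0 such that for all α, β with β − α ≥ 2π and all T > 0 for which the energy E = E(α, β, T) of the unique monotone Pendulum-Lemma solution from α to β in time T satisfies 0 < E ≤ 1, one has |∂_T ẋ(0; T, α, β)| ≤ c / T. -/

import Mathlib

/-- The pendulum potential `V(x) = −cos x − 1`. -/
noncomputable def Vpend (x : ℝ) : ℝ := -Real.cos x - 1

/-- `IsPendSolOn x v s` : on the set `s`, `x` solves the pendulum equation
`ẍ + sin x = 0`, with velocity `v`. -/
def IsPendSolOn (x v : ℝ → ℝ) (s : Set ℝ) : Prop :=
  ∀ t ∈ s, HasDerivAt x (v t) t ∧ HasDerivAt v (-Real.sin (x t)) t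

/-
By energy conservation a solution of positive energy `E` moves with speed `√(2(E − V))`, so its
travel time from `α` to `β` is the time map `F(E) = ∫_α^β (2(E − V))^{-1/2}`, i.e. `F(E(T)) = T`.
Since `F(e) − F(e') ≥ (e' − e) ∫_α^β (2(e' − V))^{-3/2}` for `e ≤ e'`, the energy is locally
Lipschitz in `T` with constant `1 / G`, where `G = ∫_α^β (2(2E − V))^{-3/2}`; this bounds
`Ė(T) = ẋ(0) ∂_T ẋ(0)`. If `β − α` lies between `2πn` and `4πn`, then `T ≤ 4πn / √(2E)`, while
the peaks of the integrand of `G` near `π + 2πℤ` give `G ≥ n / (4√2 E)`. With `|ẋ(0)| ≥ √(2E)`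
this yields `T |∂_T ẋ(0)| ≤ 8√2π`.
-/

open Real Set Filter Topology MeasureTheory

lemma exists_nat_mul_le_and_le_two_mul {p L : ℝ} (hp : 0 < p) (hL : p ≤ L) :
    ∃ n : ℕ, n * p ≤ L ∧ L ≤ 2 * n * p := by
  have h1 : 1 ≤ L / p := (one_le_div hp).2 hL
  have hn : (1 : ℝ) ≤ ⌊L / p⌋₊ := by exact_mod_cast Nat.le_floor (by exact_mod_cast h1)
  refine ⟨⌊L / p⌋₊, (le_div_iff₀ hp).1 (Nat.floor_le (by linarith)), ?_⟩
  have := (div_lt_iff₀ hp).1 (Nat.lt_floor_add_one (L / p))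
  nlinarith

namespace Function.Periodic

variable {f : ℝ → ℝ} {p : ℝ}

lemma intervalIntegral_add_nat_mul_eq (hf : Periodic f p)
    (hint : ∀ a b, IntervalIntegrable f volume a b) (n : ℕ) (a : ℝ) :
    ∫ y in a..a + n * p, f y = n * ∫ y in 0..p, f y := by
  simpa [hf.intervalIntegral_add_eq a 0] using hf.intervalIntegral_add_zsmul_eq n a hint

lemma intervalIntegral_le_nat_mul (hf : Periodic f p)
    (hint : ∀ a b, IntervalIntegrable f volume a b) (hf₀ : ∀ y, 0 ≤ f y) {a b : ℝ} {n : ℕ}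
    (hab : a ≤ b) (hb : b ≤ a + n * p) :
    ∫ y in a..b, f y ≤ n * ∫ y in 0..p, f y := by
  rw [← hf.intervalIntegral_add_nat_mul_eq hint]
  exact intervalIntegral.integral_mono_interval le_rfl hab hb (.of_forall hf₀) (hint _ _)

lemma nat_mul_le_intervalIntegral (hf : Periodic f p)
    (hint : ∀ a b, IntervalIntegrable f volume a b) (hf₀ : ∀ y, 0 ≤ f y) (hp : 0 ≤ p)
    {a b : ℝ} {n : ℕ} (hb : a + n * p ≤ b) :
    n * ∫ y in 0..p, f y ≤ ∫ y in a..b, f y := by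
  rw [← hf.intervalIntegral_add_nat_mul_eq hint]
  exact intervalIntegral.integral_mono_interval le_rfl (by nlinarith) hb (.of_forall hf₀)
    (hint _ _)

end Function.Periodic

lemma inv_sqrt_sub_inv_sqrt_ge {a b : ℝ} (ha : 0 < a) (hab : a ≤ b) :
    (b - a) / 2 * (√b)⁻¹ ^ 3 ≤ (√a)⁻¹ - (√b)⁻¹ := by
  obtain ⟨A, hA, rfl⟩ : ∃ A, 0 < A ∧ A ^ 2 = a := ⟨√a, sqrt_pos.2 ha, sq_sqrt ha.le⟩
  obtain ⟨B, hB, rfl⟩ : ∃ B, 0 < B ∧ B ^ 2 = b :=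
    ⟨√b, sqrt_pos.2 (by linarith), sq_sqrt (by linarith)⟩
  rw [sqrt_sq hA.le, sqrt_sq hB.le, ← sub_nonneg]
  have h : A⁻¹ - B⁻¹ - (B ^ 2 - A ^ 2) / 2 * B⁻¹ ^ 3 =
      (B - A) ^ 2 * (2 * B + A) / (2 * A * B ^ 3) := by
    field_simp
    ring
  rw [h]
  positivity

lemma hasDerivAt_Vpend (y : ℝ) : HasDerivAt Vpend (sin y) y := by
  show HasDerivAt (fun y => -cos y - 1) _ _
  simpa using ((hasDerivAt_cos y).neg).sub_const 1

@[fun_prop]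
lemma continuous_Vpend : Continuous Vpend :=
  continuous_iff_continuousAt.2 fun y => (hasDerivAt_Vpend y).continuousAt

lemma sub_Vpend_pos {e : ℝ} (he : 0 < e) (y : ℝ) : 0 < e - Vpend y := by
  unfold Vpend; linarith [neg_one_le_cos y]

/-- The density `dx / ẋ` of travel time at position `y` along a solution of energy `e`. -/
noncomputable def timeDensity (e y : ℝ) : ℝ := (√(2 * (e - Vpend y)))⁻¹

noncomputable def timeMap (α β e : ℝ) : ℝ := ∫ y in α..β, timeDensity e y

section timeDensity

variable {e : ℝ}

lemma timeDensity_pos (he : 0 < e) (y : ℝ) : 0 < timeDensity e y :=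
  inv_pos.2 (sqrt_pos.2 (by linarith [sub_Vpend_pos he y]))

lemma continuous_timeDensity (he : 0 < e) : Continuous (timeDensity e) :=
  Continuous.inv₀ (by fun_prop) fun y => (sqrt_pos.2 (by linarith [sub_Vpend_pos he y])).ne'

lemma timeDensity_periodic (e : ℝ) : Function.Periodic (timeDensity e) (2 * π) := by
  intro y; simp [timeDensity, Vpend]

lemma timeDensity_le (he : 0 < e) (y : ℝ) : timeDensity e y ≤ (√(2 * e))⁻¹ := by
  refine inv_anti₀ (sqrt_pos.2 (by linarith)) (sqrt_le_sqrt ?_)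
  unfold Vpend; linarith [neg_one_le_cos y]

lemma timeDensity_ge_of_abs_sub_pi_le (he : 0 < e) {y : ℝ} (hy : |y - π| ≤ √(2 * e)) :
    (√2 * √(2 * e))⁻¹ ≤ timeDensity e y := by
  have hcos : 2 + 2 * cos y ≤ (y - π) ^ 2 := by
    have := one_sub_sq_div_two_le_cos (x := y - π)
    rw [cos_sub_pi] at this
    linarith
  have hsq : (y - π) ^ 2 ≤ 2 * e := by
    have := pow_le_pow_left₀ (abs_nonneg _) hy 2
    rwa [sq_abs, sq_sqrt (by linarith)] at this
  refine inv_anti₀ (sqrt_pos.2 (by linarith [sub_Vpend_pos he y])) ?_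
  rw [← sqrt_mul zero_le_two]
  exact sqrt_le_sqrt (by unfold Vpend; linarith)

lemma sub_mul_timeDensity_pow_three_le {e' M : ℝ} (he : 0 < e) (hee' : e ≤ e') (he'M : e' ≤ M)
    (y : ℝ) : (e' - e) * timeDensity M y ^ 3 ≤ timeDensity e y - timeDensity e' y := by
  have hM : timeDensity M y ≤ timeDensity e' y :=
    inv_anti₀ (sqrt_pos.2 (by linarith [sub_Vpend_pos he y])) (sqrt_le_sqrt (by linarith))
  calc (e' - e) * timeDensity M y ^ 3
      ≤ (e' - e) * timeDensity e' y ^ 3 :=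
        mul_le_mul_of_nonneg_left
          (pow_le_pow_left₀ (timeDensity_pos (by linarith) y).le hM 3) (by linarith)
    _ ≤ timeDensity e y - timeDensity e' y := by
        have := inv_sqrt_sub_inv_sqrt_ge (by linarith [sub_Vpend_pos he y])
          (by linarith : 2 * (e - Vpend y) ≤ 2 * (e' - Vpend y))
        rwa [show (2 * (e' - Vpend y) - 2 * (e - Vpend y)) / 2 = e' - e by ring] at this

lemma integral_timeDensity_period_le (he : 0 < e) :
    ∫ y in 0..2 * π, timeDensity e y ≤ 2 * π * (√(2 * e))⁻¹ := by
  have := intervalIntegral.integral_mono_on (μ := volume) (a := 0) (b := 2 * π) (by positivity)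
    ((continuous_timeDensity he).intervalIntegrable _ _) intervalIntegrable_const
    (fun y _ => timeDensity_le he y)
  rwa [intervalIntegral.integral_const, smul_eq_mul, sub_zero] at this

lemma le_integral_timeDensity_pow_three_period (he : 0 < e) (he2 : e ≤ 2) :
    (2 * √2 * e)⁻¹ ≤ ∫ y in 0..2 * π, timeDensity e y ^ 3 := by
  set δ := √(2 * e)
  have hδ : 0 < δ := sqrt_pos.2 (by linarith)
  have hδ2 : δ ^ 2 = 2 * e := sq_sqrt (by linarith)
  have hδπ : δ ≤ π := by nlinarith [pi_gt_three]
  have hint : Continuous fun y => timeDensity e y ^ 3 := (continuous_timeDensity he).pow 3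
  have hpeak : 2 * δ * (√2 * δ)⁻¹ ^ 3 ≤ ∫ y in π - δ..π + δ, timeDensity e y ^ 3 := by
    have := intervalIntegral.integral_mono_on (μ := volume) (a := π - δ) (b := π + δ)
      (by linarith) intervalIntegrable_const
      (hint.intervalIntegrable (π - δ) (π + δ)) fun y hy =>
        pow_le_pow_left₀ (by positivity) (timeDensity_ge_of_abs_sub_pi_le he
          (abs_sub_le_iff.2 ⟨by linarith [hy.2], by linarith [hy.1]⟩)) 3
    rwa [intervalIntegral.integral_const, smul_eq_mul, show π + δ - (π - δ) = 2 * δ by ring]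
      at this
  calc (2 * √2 * e)⁻¹ = 2 * δ * (√2 * δ)⁻¹ ^ 3 := by
        field_simp
        rw [sq_sqrt zero_le_two, hδ2]
        ring
    _ ≤ ∫ y in π - δ..π + δ, timeDensity e y ^ 3 := hpeak
    _ ≤ ∫ y in 0..2 * π, timeDensity e y ^ 3 :=
        intervalIntegral.integral_mono_interval (by linarith) (by linarith) (by linarith)
          (.of_forall fun y => (pow_pos (timeDensity_pos he y) 3).le) (hint.intervalIntegrable _ _)

end timeDensity

section timeMap

variable {α β : ℝ}

lemma integral_timeDensity_pow_three_pos (hαβ : α < β) {e : ℝ} (he : 0 < e) :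
    0 < ∫ y in α..β, timeDensity e y ^ 3 :=
  intervalIntegral.intervalIntegral_pos_of_pos_on
    (((continuous_timeDensity he).pow 3).intervalIntegrable _ _)
    (fun y _ => pow_pos (timeDensity_pos he y) 3) hαβ

lemma timeMap_pos (hαβ : α < β) {e : ℝ} (he : 0 < e) : 0 < timeMap α β e :=
  intervalIntegral.intervalIntegral_pos_of_pos_on
    ((continuous_timeDensity he).intervalIntegrable _ _) (fun y _ => timeDensity_pos he y) hαβ

lemma mul_abs_sub_le_abs_timeMap_sub (hαβ : α ≤ β) {e e' M : ℝ} (he : 0 < e) (he' : 0 < e')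
    (heM : e ≤ M) (he'M : e' ≤ M) :
    (∫ y in α..β, timeDensity M y ^ 3) * |e - e'| ≤ |timeMap α β e - timeMap α β e'| := by
  wlog hee' : e ≤ e' generalizing e e'
  · rw [abs_sub_comm, abs_sub_comm (timeMap α β e)]
    exact this he' he he'M heM (by linarith)
  have hM : 0 < M := by linarith
  rw [abs_of_nonpos (by linarith), neg_sub, mul_comm, ← intervalIntegral.integral_const_mul,
    timeMap, timeMap, ← intervalIntegral.integral_sub
      ((continuous_timeDensity he).intervalIntegrable _ _)
      ((continuous_timeDensity he').intervalIntegrable _ _)]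
  refine le_trans ?_ (le_abs_self _)
  exact intervalIntegral.integral_mono_on hαβ
    ((continuous_const.mul ((continuous_timeDensity hM).pow 3)).intervalIntegrable _ _)
    (((continuous_timeDensity he).sub (continuous_timeDensity he')).intervalIntegrable _ _)
    fun y _ => sub_mul_timeDensity_pow_three_le he hee' he'M y

lemma timeMap_le (hαβ : α ≤ β) {e : ℝ} (he : 0 < e) {n : ℕ} (hβ : β ≤ α + n * (2 * π)) :
    timeMap α β e ≤ n * (2 * π * (√(2 * e))⁻¹) :=
  ((timeDensity_periodic e).intervalIntegral_le_nat_mul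
    (fun _ _ => (continuous_timeDensity he).intervalIntegrable _ _)
    (fun y => (timeDensity_pos he y).le) hαβ hβ).trans
    (by gcongr; exact integral_timeDensity_period_le he)

lemma le_integral_timeDensity_pow_three {e : ℝ} (he : 0 < e) (he2 : e ≤ 2) {n : ℕ}
    (hβ : α + n * (2 * π) ≤ β) :
    n * (2 * √2 * e)⁻¹ ≤ ∫ y in α..β, timeDensity e y ^ 3 := by
  have hper : Function.Periodic (fun y => timeDensity e y ^ 3) (2 * π) := fun y => by
    simp only [timeDensity_periodic e y]
  refine le_trans ?_ (hper.nat_mul_le_intervalIntegral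
    (fun _ _ => ((continuous_timeDensity he).pow 3).intervalIntegrable _ _)
    (fun y => (pow_pos (timeDensity_pos he y) 3).le) (by positivity) hβ)
  gcongr
  exact le_integral_timeDensity_pow_three_period he he2

lemma timeMap_le_mul_integral_timeDensity_pow_three (hαβ : 2 * π ≤ β - α) {e : ℝ} (he : 0 < e)
    (he1 : e ≤ 1) :
    timeMap α β e ≤ 8 * √2 * π * √(2 * e) * ∫ y in α..β, timeDensity (2 * e) y ^ 3 := by
  obtain ⟨n, hlow, hup⟩ := exists_nat_mul_le_and_le_two_mul two_pi_pos hαβ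
  have hS : 0 < √(2 * e) := sqrt_pos.2 (by linarith)
  calc timeMap α β e ≤ (2 * n : ℕ) * (2 * π * (√(2 * e))⁻¹) :=
        timeMap_le (by linarith [pi_pos]) he (by push_cast; linarith)
    _ = 8 * √2 * π * √(2 * e) * (n * (2 * √2 * (2 * e))⁻¹) := by
        have hS2 : √(2 * e) ^ 2 = 2 * e := sq_sqrt (by linarith)
        field_simp
        push_cast
        rw [hS2]
        ring
    _ ≤ 8 * √2 * π * √(2 * e) * ∫ y in α..β, timeDensity (2 * e) y ^ 3 := by
        gcongr
        exact le_integral_timeDensity_pow_three (by linarith) (by linarith) (by linarith)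

lemma abs_mul_integral_le_one_of_timeMap_eq (hαβ : α < β) {E : ℝ → ℝ} {E' T : ℝ}
    (hE : HasDerivAt E E' T) (hET : 0 < E T)
    (hmap : ∀ᶠ s in 𝓝 T, 0 < E s → timeMap α β (E s) = s) :
    |E'| * ∫ y in α..β, timeDensity (2 * E T) y ^ 3 ≤ 1 := by
  set G := ∫ y in α..β, timeDensity (2 * E T) y ^ 3
  have hG : 0 < G := integral_timeDensity_pow_three_pos hαβ (by linarith)
  have hnear : ∀ᶠ s in 𝓝 T, E s ∈ Ioo 0 (2 * E T) :=
    hE.continuousAt (Ioo_mem_nhds hET (by linarith))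
  rw [← le_div_iff₀ hG, one_div]
  refine hE.le_of_lip' (by positivity) ?_
  filter_upwards [hmap, hnear] with s hs hEs
  rw [Real.norm_eq_abs, Real.norm_eq_abs, ← div_eq_inv_mul, le_div_iff₀ hG, mul_comm]
  have := mul_abs_sub_le_abs_timeMap_sub hαβ.le hEs.1 hET hEs.2.le (by linarith)
  rwa [hs hEs.1, hmap.self_of_nhds hET] at this

end timeMap

lemma IsPendSolOn.energy_eq {x v : ℝ → ℝ} {a b : ℝ} (h : IsPendSolOn x v (Icc a b)) :
    ∀ t ∈ Icc a b, v t ^ 2 / 2 + Vpend (x t) = v a ^ 2 / 2 + Vpend (x a) := by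
  have hderiv : ∀ t ∈ Icc a b, HasDerivAt (fun u => v u ^ 2 / 2 + Vpend (x u)) 0 t := by
    intro t ht
    obtain ⟨hx, hv⟩ := h t ht
    exact (((hv.pow 2).div_const 2).add ((hasDerivAt_Vpend (x t)).comp t hx)).congr_deriv
      (by ring)
  exact constant_of_has_deriv_right_zero
    (fun t ht => (hderiv t ht).continuousAt.continuousWithinAt)
    (fun t ht => (hderiv t (Ico_subset_Icc_self ht)).hasDerivWithinAt)

lemma IsPendSolOn.timeMap_eq {x v : ℝ → ℝ} {a b α β : ℝ} (h : IsPendSolOn x v (Icc a b))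
    (hab : a ≤ b) (hxa : x a = α) (hxb : x b = β) (hαβ : α < β)
    (hE : 0 < v a ^ 2 / 2 + Vpend α) :
    timeMap α β (v a ^ 2 / 2 + Vpend α) = b - a := by
  set E := v a ^ 2 / 2 + Vpend α with hE_def
  set speed : ℝ → ℝ := fun t => √(2 * (E - Vpend (x t)))
  have hspeed : ∀ t, 0 < speed t := fun t => sqrt_pos.2 (by linarith [sub_Vpend_pos hE (x t)])
  have hxc : ContinuousOn x (Icc a b) := fun t ht => (h t ht).1.continuousAt.continuousWithinAt
  have hvc : ContinuousOn v (Icc a b) := fun t ht => (h t ht).2.continuousAt.continuousWithinAt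
  have hsq : EqOn (v ^ 2) (speed ^ 2) (Icc a b) := fun t ht => by
    have := h.energy_eq t ht
    rw [hxa] at this
    simp only [Pi.pow_apply, speed]
    rw [sq_sqrt (by linarith [sub_Vpend_pos hE (x t)])]
    linarith [hE_def]
  have hcov : timeMap α β E = ∫ t in a..b, v t / speed t := by
    rw [timeMap, ← hxa, ← hxb, ← intervalIntegral.integral_comp_mul_deriv
      (fun t ht => (h t (uIcc_of_le hab ▸ ht)).1) (uIcc_of_le hab ▸ hvc)
      (continuous_timeDensity hE)]
    refine intervalIntegral.integral_congr fun t _ => ?_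
    simp [timeDensity, speed, div_eq_inv_mul]
  have hspeedc : ContinuousOn speed (Icc a b) :=
    (by fun_prop : Continuous fun y => √(2 * (E - Vpend y))).comp_continuousOn hxc
  -- `v = ±speed` on `[a, b]`, and the sign `-` would make the time map negative.
  rcases isPreconnected_Icc.eq_or_eq_neg_of_sq_eq hvc hspeedc hsq
    (fun _ => (hspeed _).ne') with hv | hv
  · rw [hcov, intervalIntegral.integral_congr (g := fun _ => 1) fun t ht => by
      simp [hv (uIcc_of_le hab ▸ ht), (hspeed t).ne']]
    simp
  · have hneg : timeMap α β E = -(b - a) := by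
      rw [hcov, intervalIntegral.integral_congr (g := fun _ => -1) fun t ht => by
        simp [hv (uIcc_of_le hab ▸ ht), (hspeed t).ne']]
      simp
    linarith [timeMap_pos hαβ hE]

/-- **Polynomial smallness of `∂_T ẋ(0; T, α, β)` in the winding case.**
There is `c > 0` such that for `β − α ≥ 2π`, if for each `T > 0` the function
`x T` (with velocity `v T`) is the unique monotone Pendulum-Lemma solution of
`ẍ + sin x = 0` with `x(0) = α`, `x(T) = β`, confined to `[α, β]`, then for
every `T > 0` for which the energy `E(α,β,T) = v(0)²/2 + V(α)` of this
solution lies in `(0, 1]`, one has `|∂_T ẋ(0; T, α, β)| ≤ c/T`. -/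
theorem polynomial_decay_initial_velocity :
    ∃ c > (0:ℝ), ∀ α β : ℝ, 2 * Real.pi ≤ β - α →
      ∀ x v : ℝ → ℝ → ℝ,
      (∀ T, 0 < T →
        IsPendSolOn (x T) (v T) (Set.Icc 0 T) ∧ x T 0 = α ∧ x T T = β ∧
        ∀ t ∈ Set.Icc 0 T, α ≤ x T t ∧ x T t ≤ β) →
      ∀ T, 0 < T →
        0 < (v T 0) ^ 2 / 2 + Vpend α → (v T 0) ^ 2 / 2 + Vpend α ≤ 1 →
        |deriv (fun s => v s 0) T| ≤ c / T := by
  refine ⟨8 * √2 * π, by positivity, fun α β hαβ x v hsol T hT hE0 hE1 => ?_⟩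
  by_cases hdiff : DifferentiableAt ℝ (fun s => v s 0) T
  swap
  · rw [deriv_zero_of_not_differentiableAt hdiff, abs_zero]
    positivity
  set d := deriv (fun s => v s 0) T
  set E : ℝ → ℝ := fun s => v s 0 ^ 2 / 2 + Vpend α
  replace hE0 : 0 < E T := hE0
  have hlt : α < β := by linarith [pi_pos]
  have hmap : ∀ᶠ s in 𝓝 T, 0 < E s → timeMap α β (E s) = s := by
    filter_upwards [eventually_gt_nhds hT] with s hs hEs
    obtain ⟨hsol_s, h0, h1, -⟩ := hsol s hs
    simpa [E] using hsol_s.timeMap_eq hs.le h0 h1 hlt hEs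
  have hE' : HasDerivAt E (v T 0 * d) T :=
    (((hdiff.hasDerivAt.pow 2).div_const 2).add_const (Vpend α)).congr_deriv (by ring)
  set G := ∫ y in α..β, timeDensity (2 * E T) y ^ 3
  have hG : |v T 0| * |d| * G ≤ 1 :=
    abs_mul (v T 0) d ▸ abs_mul_integral_le_one_of_timeMap_eq hlt hE' hE0 hmap
  have hT_le : T ≤ 8 * √2 * π * √(2 * E T) * G := (hmap.self_of_nhds hE0).symm.trans_le
    (timeMap_le_mul_integral_timeDensity_pow_three hαβ hE0 hE1)
  have hv : √(2 * E T) ≤ |v T 0| := by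
    rw [← sqrt_sq_eq_abs]
    exact sqrt_le_sqrt (by simp only [E, Vpend]; linarith [neg_one_le_cos α])
  rw [le_div_iff₀ hT]
  calc |d| * T ≤ |d| * (8 * √2 * π * √(2 * E T) * G) := by gcongr
    _ = 8 * √2 * π * (√(2 * E T) * |d| * G) := by ring
    _ ≤ 8 * √2 * π * (|v T 0| * |d| * G) := by
        gcongr
        exact (integral_timeDensity_pow_three_pos hlt (by linarith)).le
    _ ≤ 8 * √2 * π := mul_le_of_le_one_right (by positivity) hG
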